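/- Let A be abelian. In the restricted wreath product A ≀ B, suppose z x z^{-1} = y with x = (f,α), y = (g,β), z = (h,γ), and β has infinite order. Then for every δ ∈ B, the (finitely supported) product Π_{j∈ℤ} f(γ^{-1} β^j δ) equals Π_{j∈ℤ} g(β^j δ), where the products over j are taken in decreasing order of j. -/
import Mathlib


/-- The restricted wreath product `A ≀ B`: pairs `(f, b)` with `f : B → A` of finite
(multiplicative) support and `b ∈ B`, with multiplication
`(f,α)(g,β) = (f·g^α, αβ)` where `g^α(t) = g(α⁻¹t)`. -/
structure RWreath (A B : Type*) [Group A] [Group B] where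
  f : B → A
  fin : (Function.mulSupport f).Finite
  b : B

namespace RWreath

variable {A B : Type*} [Group A] [Group B]

theorem ext' : ∀ {x y : RWreath A B}, x.f = y.f → x.b = y.b → x = y := by
  rintro ⟨f1, h1, b1⟩ ⟨f2, h2, b2⟩ rfl rfl; rfl

instance : One (RWreath A B) := ⟨⟨fun _ => 1, by simp, 1⟩⟩

instance : Mul (RWreath A B) :=
  ⟨fun x y =>
    ⟨fun t => x.f t * y.f (x.b⁻¹ * t),
      Set.Finite.subset (x.fin.union (y.fin.image (fun s => x.b * s))) (by
        intro t ht
        simp only [Function.mem_mulSupport] at ht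
        rcases eq_or_ne (x.f t) 1 with h1 | h1
        · rcases eq_or_ne (y.f (x.b⁻¹ * t)) 1 with h2 | h2
          · exact absurd (by rw [h1, h2, one_mul]) ht
          · exact Or.inr ⟨x.b⁻¹ * t, Function.mem_mulSupport.mpr h2, by group⟩
        · exact Or.inl (Function.mem_mulSupport.mpr h1)),
      x.b * y.b⟩⟩

instance : Inv (RWreath A B) :=
  ⟨fun x =>
    ⟨fun t => (x.f (x.b * t))⁻¹,
      Set.Finite.subset (x.fin.preimage
        (Set.injOn_of_injective (mul_right_injective x.b)))
        (by intro t ht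
            simp only [Function.mem_mulSupport, ne_eq, inv_eq_one] at ht
            exact ht),
      x.b⁻¹⟩⟩

@[simp] theorem mul_f (x y : RWreath A B) (t : B) :
    (x * y).f t = x.f t * y.f (x.b⁻¹ * t) := rfl
@[simp] theorem mul_b (x y : RWreath A B) : (x * y).b = x.b * y.b := rfl
@[simp] theorem inv_f (x : RWreath A B) (t : B) : x⁻¹.f t = (x.f (x.b * t))⁻¹ := rfl
@[simp] theorem inv_b (x : RWreath A B) : x⁻¹.b = x.b⁻¹ := rfl
@[simp] theorem one_f (t : B) : (1 : RWreath A B).f t = 1 := rfl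
@[simp] theorem one_b : (1 : RWreath A B).b = 1 := rfl

instance : Group (RWreath A B) where
  mul_assoc x y z := ext' (by funext t; simp [mul_assoc]) (mul_assoc _ _ _)
  one_mul x := ext' (by funext t; simp) (one_mul _)
  mul_one x := ext' (by funext t; simp) (mul_one _)
  inv_mul_cancel x := ext' (by funext t; simp) (inv_mul_cancel _)

end RWreath

theorem aux_fin {A B : Type*} [Group A] [Group B] {F : B → A}
    (hF : (Function.mulSupport F).Finite) {m : ℤ → B}
    (hm : Function.Injective m) :
    (Function.mulSupport fun j : ℤ => F (m j)).Finite :=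
  hF.preimage hm.injOn

/-- Necessity direction of Matthews' conjugacy criterion, infinite-order case: in the
restricted wreath product `A ≀ B` with `A` abelian, if `z x z⁻¹ = y` with
`x = (f,α)`, `y = (g,β)`, `z = (h,γ)` and `β` has infinite order, then for every
`δ ∈ B` the finitely supported products satisfy
`∏_{j∈ℤ} f(γ⁻¹ β^j δ) = ∏_{j∈ℤ} g(β^j δ)`. -/
theorem stmt8 {A B : Type*} [CommGroup A] [Group B] (x y z : RWreath A B)
    (h : z * x * z⁻¹ = y) (hord : ¬ IsOfFinOrder y.b) :
    ∀ δ : B,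
      (∏ᶠ j : ℤ, x.f (z.b⁻¹ * y.b ^ j * δ)) = ∏ᶠ j : ℤ, y.f (y.b ^ j * δ) := by
  intro δ
  have hb : z.b * x.b * z.b⁻¹ = y.b := by rw [← h]; simp
  have hf : ∀ t, y.f t = z.f t * (x.f (z.b⁻¹ * t) * (z.f (y.b⁻¹ * t))⁻¹) := by
    intro t
    have h2 := congrArg (fun w => RWreath.f w t) h
    simp only [RWreath.mul_f, RWreath.inv_f, RWreath.mul_b] at h2
    rw [← h2]
    have h3 : z.b * ((z.b * x.b)⁻¹ * t) = y.b⁻¹ * t := by rw [← hb]; group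
    rw [h3, mul_assoc]
  have hinj : Function.Injective fun n : ℤ => y.b ^ n :=
    injective_zpow_iff_not_isOfFinOrder.mpr hord
  have hm1 : Function.Injective fun j : ℤ => z.b⁻¹ * y.b ^ j * δ := fun a b hab =>
    hinj (by simpa using hab)
  have hm2 : Function.Injective fun j : ℤ => y.b ^ j * δ := fun a b hab =>
    hinj (by simpa using hab)
  have hm3 : Function.Injective fun j : ℤ => y.b⁻¹ * (y.b ^ j * δ) := fun a b hab =>
    hm2 (by simpa using hab)
  have fin1 : (Function.mulSupport fun j : ℤ => x.f (z.b⁻¹ * y.b ^ j * δ)).Finite :=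
    aux_fin x.fin hm1
  have fin2 : (Function.mulSupport fun j : ℤ => z.f (y.b ^ j * δ)).Finite :=
    aux_fin z.fin hm2
  have fin3 : (Function.mulSupport fun j : ℤ => (z.f (y.b⁻¹ * (y.b ^ j * δ)))⁻¹).Finite := by
    simpa using aux_fin z.fin hm3
  have htel : (∏ᶠ j : ℤ, (z.f (y.b⁻¹ * (y.b ^ j * δ)))⁻¹)
      = (∏ᶠ j : ℤ, z.f (y.b ^ j * δ))⁻¹ := by
    rw [← finprod_inv_distrib]
    have he := finprod_comp_equiv (M := A) (Equiv.subRight (1 : ℤ))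
      (f := fun j : ℤ => (z.f (y.b ^ j * δ))⁻¹)
    rw [← he]
    apply finprod_congr
    intro j
    simp only [Equiv.subRight_apply]
    congr 2
    rw [zpow_sub, zpow_one]
    group
  symm
  calc (∏ᶠ j : ℤ, y.f (y.b ^ j * δ))
      = ∏ᶠ j : ℤ, z.f (y.b ^ j * δ) *
          (x.f (z.b⁻¹ * y.b ^ j * δ) * (z.f (y.b⁻¹ * (y.b ^ j * δ)))⁻¹) := by
        apply finprod_congr
        intro j
        rw [hf (y.b ^ j * δ), mul_assoc]
    _ = (∏ᶠ j : ℤ, z.f (y.b ^ j * δ)) *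
        ((∏ᶠ j : ℤ, x.f (z.b⁻¹ * y.b ^ j * δ)) *
         (∏ᶠ j : ℤ, (z.f (y.b⁻¹ * (y.b ^ j * δ)))⁻¹)) := by
        rw [finprod_mul_distrib fin2
          ((fin1.union fin3).subset (Function.mulSupport_mul _ _)),
          finprod_mul_distrib fin1 fin3]
    _ = ∏ᶠ j : ℤ, x.f (z.b⁻¹ * y.b ^ j * δ) := by
        rw [htel, mul_inv_cancel_comm_assoc]
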